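/- Let μ > 0, λ ∈ ℝ with λ + 2μ > 0, κ > 0, R > 0, and let m ≥ 2 be an integer. For ε ∈ (0, 1/2) consider the model narrow region Ω_R := {(x₁, x₂) ∈ ℝ² : |x₁| < R, −ε/2 − (κ/2)|x₁|^m < x₂ < ε/2 + (κ/2)|x₁|^m}, with δ(x₁) := ε + κ|x₁|^m, ū(x₁, x₂) := (x₂ + ε/2 + (κ/2)|x₁|^m)/δ(x₁), and f(t) := (1/2)(t − 1/2)² − 1/8. Define u₁¹ := (ū, ((λ+μ)/(λ+2μ))·f(ū)·δ′)ᵀ and u₁² := (((λ+μ)/μ)·f(ū)·δ′, ū)ᵀ, and the elastic energy density W_{λ,μ}(v) := λ(∂₁v¹ + ∂₂v²)² + μ[2(∂₁v¹)² + (∂₂v¹ + ∂₁v²)² + 2(∂₂v²)²]. Then there exists a constant C > 0, depending only on λ, μ, κ, m, R and not on ε, such that for all ε ∈ (0, 1/2): |∫_{Ω_R} W_{λ,μ}(u₁¹) dx − μ·∫_{−R}^{R} 1/δ(x₁) dx₁| ≤ C and |∫_{Ω_R} W_{λ,μ}(u₁²) dx − (λ+2μ)·∫_{−R}^{R} 1/δ(x₁)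 dx₁| ≤ C. -/

import Mathlib

/-!
Across the gap `{|x₂| < δ(x₁)/2}` the profile `ū` is affine in `x₂` with slope `1/δ`, so the
single term `∂₂ū = 1/δ` produces the leading energy density `μ/δ²` (resp. `(λ+2μ)/δ²`), whose
integral over a vertical fibre of length `δ` is `μ/δ` (resp. `(λ+2μ)/δ`). Every other partial
derivative is `O(1)` or `O(|x₂ δ′|/δ²)`; since `|x₂| ≤ δ/2` and `δ′² ≤ Cδ` (this is where
`m ≥ 2` enters), each of them changes the density by `O(1/δ)`, hence each fibre integral by
`O(1)`, uniformly in `ε`.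
-/

open MeasureTheory intervalIntegral

/-- Partial derivative in the first variable of a function of two real variables. -/
noncomputable def pd1 (g : ℝ → ℝ → ℝ) (x y : ℝ) : ℝ := deriv (fun s => g s y) x

/-- Partial derivative in the second variable of a function of two real variables. -/
noncomputable def pd2 (g : ℝ → ℝ → ℝ) (x y : ℝ) : ℝ := deriv (fun s => g x s) y

/-- Isotropic elastic energy density
`W_{λ,μ}(v) = λ(∂₁v¹+∂₂v²)² + μ[2(∂₁v¹)² + (∂₂v¹+∂₁v²)² + 2(∂₂v²)²]`
of a planar vector field `v = (v¹, v²)`. -/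
noncomputable def W2 (lam mu : ℝ) (v1 v2 : ℝ → ℝ → ℝ) (x y : ℝ) : ℝ :=
  lam * (pd1 v1 x y + pd2 v2 x y) ^ 2 +
    mu * (2 * (pd1 v1 x y) ^ 2 + (pd2 v1 x y + pd1 v2 x y) ^ 2 + 2 * (pd2 v2 x y) ^ 2)

open Set

theorem hasDerivAt_mul_abs_pow (k : ℕ) (x : ℝ) :
    HasDerivAt (fun y : ℝ => y * |y| ^ k) ((k + 1) * |x| ^ k) x := by
  have hne : ∀ y ≠ (0 : ℝ), HasDerivAt (fun y : ℝ => y * |y| ^ k) ((k + 1) * |y| ^ k) y := by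
    intro y hy
    refine ((hasDerivAt_id' y).fun_mul ((hasDerivAt_abs hy).fun_pow k)).congr_deriv ?_
    have hsign : y * (SignType.sign y : ℝ) = |y| := by
      rcases hy.lt_or_gt with h | h <;> simp [h, abs_of_neg, abs_of_pos]
    rcases k with _ | k
    · simp
    · simp only [Nat.add_sub_cancel]
      push_cast
      linear_combination (↑k + 1) * |y| ^ k * hsign
  rcases eq_or_ne x 0 with rfl | hx
  · exact hasDerivAt_of_hasDerivAt_of_ne hne (by fun_prop) (by fun_prop)
  · exact hne x hx

theorem hasDerivAt_abs_pow_add_two (k : ℕ) (x : ℝ) :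
    HasDerivAt (fun y : ℝ => |y| ^ (k + 2)) ((k + 2) * (x * |x| ^ k)) x := by
  have hpow : (fun y : ℝ => |y| ^ (k + 2)) = fun y => y * (y * |y| ^ k) := by
    ext y
    rw [← mul_assoc, ← sq, ← sq_abs y]
    ring
  rw [hpow]
  exact ((hasDerivAt_id' x).fun_mul (hasDerivAt_mul_abs_pow k x)).congr_deriv (by ring)

section RegionBetween

variable {α : Type*} {ν : Measure ℝ} {f g : α → ℝ} {s : Set α} {G : α × ℝ → ℝ}

theorem indicator_regionBetween_apply (x : α) (y : ℝ) :
    (regionBetween f g s).indicator G (x, y) =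
      s.indicator (fun x => (Ioo (f x) (g x)).indicator (fun y => G (x, y)) y) x := by
  by_cases hx : x ∈ s
  · by_cases hy : y ∈ Ioo (f x) (g x)
    · rw [indicator_of_mem (show (x, y) ∈ regionBetween f g s from ⟨hx, hy⟩),
        indicator_of_mem hx, indicator_of_mem hy]
    · rw [indicator_of_notMem (fun h => hy h.2), indicator_of_mem hx, indicator_of_notMem hy]
  · rw [indicator_of_notMem (fun h => hx h.1), indicator_of_notMem hx]

theorem integral_indicator_regionBetween (x : α) :
    ∫ y, (regionBetween f g s).indicator G (x, y) ∂ν =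
      s.indicator (fun x => ∫ y in Ioo (f x) (g x), G (x, y) ∂ν) x := by
  simp_rw [indicator_regionBetween_apply]
  by_cases hx : x ∈ s <;> simp [hx, MeasureTheory.integral_indicator measurableSet_Ioo]

variable [MeasurableSpace α] {μ : Measure α} (hf : Measurable f) (hg : Measurable g)
  (hs : MeasurableSet s)
include hf hg hs

theorem setIntegral_regionBetween [SFinite μ] [SFinite ν]
    (hG : IntegrableOn G (regionBetween f g s) (μ.prod ν)) :
    ∫ p in regionBetween f g s, G p ∂(μ.prod ν) =
      ∫ x in s, ∫ y in Ioo (f x) (g x), G (x, y) ∂ν ∂μ := by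
  have hreg := measurableSet_regionBetween hf hg hs
  rw [← MeasureTheory.integral_indicator hreg,
    integral_prod _ ((integrable_indicator_iff hreg).2 hG)]
  simp_rw [integral_indicator_regionBetween]
  exact MeasureTheory.integral_indicator hs

theorem IntegrableOn.integral_regionBetween [SFinite μ] [SFinite ν]
    (hG : IntegrableOn G (regionBetween f g s) (μ.prod ν)) :
    IntegrableOn (fun x => ∫ y in Ioo (f x) (g x), G (x, y) ∂ν) s μ := by
  have hreg := measurableSet_regionBetween hf hg hs
  have h := ((integrable_indicator_iff hreg).2 hG).integral_prod_left
  simp_rw [integral_indicator_regionBetween] at h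
  exact (integrable_indicator_iff hs).1 h

theorem IntegrableOn.ae_integrableOn_Ioo_of_regionBetween [SFinite μ] [SFinite ν]
    (hG : IntegrableOn G (regionBetween f g s) (μ.prod ν)) :
    ∀ᵐ x ∂μ, x ∈ s → IntegrableOn (fun y => G (x, y)) (Ioo (f x) (g x)) ν := by
  have hreg := measurableSet_regionBetween hf hg hs
  filter_upwards [((integrable_indicator_iff hreg).2 hG).prod_right_ae] with x hx hxs
  simp_rw [indicator_regionBetween_apply, indicator_of_mem hxs] at hx
  exact (integrable_indicator_iff measurableSet_Ioo).1 hx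

end RegionBetween

theorem abs_setIntegral_Ioo_sub_le {φ : ℝ → ℝ} {u v A K : ℝ} (huv : u < v)
    (hφ : IntegrableOn φ (Ioo u v))
    (hb : ∀ y ∈ Ioo u v, |φ y - A / (v - u) ^ 2| ≤ K / (v - u)) :
    |(∫ y in Ioo u v, φ y) - A / (v - u)| ≤ K := by
  have hvol : volume.real (Ioo u v) = v - u := by simp [huv.le]
  have hconst : ∫ _ in Ioo u v, A / (v - u) ^ 2 = A / (v - u) := by
    rw [setIntegral_const, hvol, smul_eq_mul]
    field_simp [sub_ne_zero.2 huv.ne']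
  rw [← hconst, ← MeasureTheory.integral_sub hφ (integrableOn_const (C := A / (v - u) ^ 2)
    measure_Ioo_lt_top.ne), ← Real.norm_eq_abs]
  calc _ ≤ K / (v - u) * volume.real (Ioo u v) :=
        norm_setIntegral_le_of_norm_le_const measure_Ioo_lt_top hb
    _ = K := by rw [hvol]; field_simp [sub_ne_zero.2 huv.ne']

theorem abs_setIntegral_regionBetween_sub_le {α : Type*} [MeasurableSpace α] {μ : Measure α}
    [SFinite μ] {f g : α → ℝ} {s : Set α} {G : α × ℝ → ℝ} {A K : ℝ}
    (hf : Measurable f) (hg : Measurable g) (hs : MeasurableSet s) (hμs : μ s ≠ ⊤)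
    (hfg : ∀ x ∈ s, f x < g x) (hG : IntegrableOn G (regionBetween f g s) (μ.prod volume))
    (hw : IntegrableOn (fun x => 1 / (g x - f x)) s μ)
    (hb : ∀ x ∈ s, ∀ y ∈ Ioo (f x) (g x),
      |G (x, y) - A / (g x - f x) ^ 2| ≤ K / (g x - f x)) :
    |(∫ p in regionBetween f g s, G p ∂(μ.prod volume)) - A * ∫ x in s, 1 / (g x - f x) ∂μ|
      ≤ K * μ.real s := by
  rw [setIntegral_regionBetween hf hg hs hG, ← MeasureTheory.integral_const_mul,
    ← MeasureTheory.integral_sub (IntegrableOn.integral_regionBetween hf hg hs hG)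
      (hw.const_mul A), ← Real.norm_eq_abs]
  refine norm_setIntegral_le_of_norm_le_const_ae' hμs.lt_top ?_
  filter_upwards [IntegrableOn.ae_integrableOn_Ioo_of_regionBetween hf hg hs hG] with x hx hxs
  rw [Real.norm_eq_abs, mul_one_div]
  exact abs_setIntegral_Ioo_sub_le (hfg x hxs) (hx hxs) (hb x hxs)

theorem abs_setIntegral_regionBetween_symm_sub_le {δ : ℝ → ℝ} {G : ℝ × ℝ → ℝ} {a b A K : ℝ}
    (hab : a ≤ b) (hδ : Continuous δ) (hpos : ∀ x, 0 < δ x) (hG : Continuous G)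
    (hb : ∀ x ∈ Ioo a b, ∀ y ∈ Ioo (-(δ x / 2)) (δ x / 2),
      |G (x, y) - A / δ x ^ 2| ≤ K / δ x) :
    |(∫ p in regionBetween (fun x => -(δ x / 2)) (fun x => δ x / 2) (Ioo a b), G p) -
        A * ∫ x in a..b, 1 / δ x| ≤ K * (b - a) := by
  have hwidth : ∀ x, δ x / 2 - -(δ x / 2) = δ x := fun x => by ring
  obtain ⟨M, hM⟩ := isCompact_Icc.exists_bound_of_continuousOn (hδ.continuousOn (s := Icc a b))
  have hsub : regionBetween (fun x => -(δ x / 2)) (fun x => δ x / 2) (Ioo a b) ⊆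
      Icc a b ×ˢ Icc (-M) M := by
    rintro ⟨x, y⟩ ⟨hx, hy₁, hy₂⟩
    have hδM := (abs_le.1 (hM x (Ioo_subset_Icc_self hx))).2
    dsimp only at hx hy₁ hy₂
    exact ⟨Ioo_subset_Icc_self hx, by linarith [hpos x], by linarith [hpos x]⟩
  have hGint : IntegrableOn G (regionBetween (fun x => -(δ x / 2)) (fun x => δ x / 2) (Ioo a b))
      (volume.prod volume) :=
    (hG.continuousOn.integrableOn_compact (isCompact_Icc.prod isCompact_Icc)).mono_set hsub
  have hinv : IntegrableOn (fun x => 1 / δ x) (Ioo a b) :=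
    ((continuousOn_const.div hδ.continuousOn fun x _ => (hpos x).ne').integrableOn_compact
      isCompact_Icc).mono_set Ioo_subset_Icc_self
  have h := abs_setIntegral_regionBetween_sub_le (μ := volume) (A := A) (K := K)
    (by fun_prop) (by fun_prop) measurableSet_Ioo measure_Ioo_lt_top.ne
    (fun x _ => by linarith [hpos x]) hGint (by simpa only [hwidth] using hinv)
    (fun x hx y hy => by simpa only [hwidth] using hb x hx y hy)
  simp only [hwidth, Real.volume_real_Ioo_of_le hab] at h
  rwa [intervalIntegral.integral_of_le hab, integral_Ioc_eq_integral_Ioo]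

-- `ubar δ` and `vbar c δ δ'` are the paper's `ū` and `c f(ū) δ′` on the gap `{|x₂| < δ(x₁)/2}`.
noncomputable def ubar (δ : ℝ → ℝ) (s t : ℝ) : ℝ := (t + δ s / 2) / δ s

noncomputable def fbar (x : ℝ) : ℝ := 1 / 2 * (x - 1 / 2) ^ 2 - 1 / 8

noncomputable def vbar (c : ℝ) (δ δ' : ℝ → ℝ) (s t : ℝ) : ℝ := c * fbar (ubar δ s t) * δ' s

theorem hasDerivAt_fbar (x : ℝ) : HasDerivAt fbar (x - 1 / 2) x := by
  refine ((((hasDerivAt_id' x).sub_const (1 / 2)).fun_pow 2).const_mul (1 / 2)).sub_const (1 / 8)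
    |>.congr_deriv ?_
  ring

theorem abs_fbar_le {x : ℝ} (hx : x ∈ Icc (0 : ℝ) 1) : |fbar x| ≤ 1 / 8 := by
  rw [fbar, abs_le]
  constructor <;> nlinarith [hx.1, hx.2]

section Profile

variable {δ δ' δ'' : ℝ → ℝ} {c s t : ℝ}

theorem ubar_sub_half (h0 : δ s ≠ 0) : ubar δ s t - 1 / 2 = t / δ s := by
  rw [ubar]
  field_simp
  ring

theorem ubar_mem_Icc (hd : 0 < δ s) (ht : t ∈ Ioo (-(δ s / 2)) (δ s / 2)) :
    ubar δ s t ∈ Icc (0 : ℝ) 1 := by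
  rw [ubar, mem_Icc, le_div_iff₀ hd, div_le_iff₀ hd]
  constructor <;> linarith [ht.1, ht.2]

theorem hasDerivAt_ubar_snd : HasDerivAt (ubar δ s) (1 / δ s) t :=
  ((hasDerivAt_id' t).add_const _).div_const _

theorem hasDerivAt_ubar_fst (hδ : HasDerivAt δ (δ' s) s) (h0 : δ s ≠ 0) :
    HasDerivAt (fun s => ubar δ s t) (-(t * δ' s / δ s) / δ s) s := by
  refine (((hδ.div_const 2).const_add t).div hδ h0).congr_deriv ?_
  field_simp
  ring

theorem hasDerivAt_vbar_snd (h0 : δ s ≠ 0) :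
    HasDerivAt (vbar c δ δ' s) (c * (t * δ' s / δ s) / δ s) t := by
  refine ((((hasDerivAt_fbar _).comp t hasDerivAt_ubar_snd).const_mul c).mul_const (δ' s))
    |>.congr_deriv ?_
  rw [ubar_sub_half h0]
  ring

theorem hasDerivAt_vbar_fst (hδ : HasDerivAt δ (δ' s) s) (hδ' : HasDerivAt δ' (δ'' s) s)
    (h0 : δ s ≠ 0) :
    HasDerivAt (fun s => vbar c δ δ' s t)
      (c * (fbar (ubar δ s t) * δ'' s - (t * δ' s / δ s) ^ 2 / δ s)) s := by
  refine ((((hasDerivAt_fbar _).comp s (hasDerivAt_ubar_fst hδ h0)).const_mul c).fun_mul hδ')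
    |>.congr_deriv ?_
  rw [Function.comp_apply, ubar_sub_half h0]
  ring

end Profile

noncomputable def energyBound (α β γ Q B : ℝ) : ℝ := |α| * (B / 4) + |β| * Q + |γ| * (Q ^ 2 * B)

theorem abs_quadratic_remainder_le {d a q B Q α β γ : ℝ} (hd : 0 < d) (hdB : d ≤ B)
    (ha : a ^ 2 ≤ B * d / 4) (hq : |q| ≤ Q) :
    |α * (a / d) ^ 2 + β * (q / d) + γ * q ^ 2| ≤ energyBound α β γ Q B / d := by
  have hq2 : q ^ 2 ≤ Q ^ 2 := sq_le_sq' (abs_le.1 hq).1 (abs_le.1 hq).2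
  have h₁ : |α * (a / d) ^ 2| * d ≤ |α| * (B / 4) := by
    have had : a ^ 2 / d ≤ B / 4 := by rw [div_le_iff₀ hd]; linarith
    calc |α * (a / d) ^ 2| * d = |α| * (a ^ 2 / d) := by
          rw [abs_mul, abs_of_nonneg (sq_nonneg (a / d))]
          field_simp
      _ ≤ |α| * (B / 4) := by gcongr
  have h₂ : |β * (q / d)| * d ≤ |β| * Q := by
    rw [abs_mul, abs_div, abs_of_pos hd, mul_assoc, div_mul_cancel₀ _ hd.ne']
    gcongr
  have h₃ : |γ * q ^ 2| * d ≤ |γ| * (Q ^ 2 * B) := by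
    rw [abs_mul, abs_of_nonneg (sq_nonneg q), mul_assoc]
    gcongr
  rw [energyBound, le_div_iff₀ hd]
  calc _ ≤ (|α * (a / d) ^ 2| + |β * (q / d)| + |γ * q ^ 2|) * d := by
        gcongr
        exact abs_add_three _ _ _
    _ ≤ _ := by linarith

section Energy

variable {δ δ' δ'' : ℝ → ℝ} {lam mu c B s t : ℝ}

theorem pd1_ubar (hδ : HasDerivAt δ (δ' s) s) (h0 : δ s ≠ 0) :
    pd1 (ubar δ) s t = -(t * δ' s / δ s) / δ s :=
  (hasDerivAt_ubar_fst hδ h0).deriv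

theorem pd2_ubar : pd2 (ubar δ) s t = 1 / δ s :=
  hasDerivAt_ubar_snd.deriv

theorem pd1_vbar (hδ : HasDerivAt δ (δ' s) s) (hδ' : HasDerivAt δ' (δ'' s) s) (h0 : δ s ≠ 0) :
    pd1 (vbar c δ δ') s t = c * (fbar (ubar δ s t) * δ'' s - (t * δ' s / δ s) ^ 2 / δ s) :=
  (hasDerivAt_vbar_fst hδ hδ' h0).deriv

theorem pd2_vbar (h0 : δ s ≠ 0) : pd2 (vbar c δ δ') s t = c * (t * δ' s / δ s) / δ s :=
  (hasDerivAt_vbar_snd h0).deriv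

variable (hd : 0 < δ s) (hB : δ s ≤ B ∧ δ' s ^ 2 ≤ B * δ s ∧ |δ'' s| ≤ B)
  (ht : t ∈ Ioo (-(δ s / 2)) (δ s / 2))
include hd hB ht

theorem sq_mul_deriv_div_le : (t * δ' s / δ s) ^ 2 ≤ B * δ s / 4 := by
  have ht2 : t ^ 2 ≤ δ s ^ 2 / 4 := by nlinarith [ht.1, ht.2]
  rw [div_pow, mul_pow, div_le_iff₀ (by positivity)]
  calc t ^ 2 * δ' s ^ 2 ≤ δ s ^ 2 / 4 * (B * δ s) :=
        mul_le_mul ht2 hB.2.1 (sq_nonneg _) (by positivity)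
    _ = B * δ s / 4 * δ s ^ 2 := by ring

theorem abs_pd1_vbar_le :
    |c * (fbar (ubar δ s t) * δ'' s - (t * δ' s / δ s) ^ 2 / δ s)| ≤ |c| * B := by
  have hf : |fbar (ubar δ s t) * δ'' s| ≤ B / 8 := by
    rw [abs_mul]
    nlinarith [abs_fbar_le (ubar_mem_Icc hd ht), abs_nonneg (fbar (ubar δ s t)),
      abs_nonneg (δ'' s), hB.2.2]
  have hq : 0 ≤ (t * δ' s / δ s) ^ 2 / δ s ∧ (t * δ' s / δ s) ^ 2 / δ s ≤ B / 4 :=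
    ⟨by positivity, by rw [div_le_iff₀ hd]; linarith [sq_mul_deriv_div_le hd hB ht]⟩
  rw [abs_mul]
  gcongr
  calc _ ≤ |fbar (ubar δ s t) * δ'' s| + |(t * δ' s / δ s) ^ 2 / δ s| := abs_sub _ _
    _ ≤ B := by rw [abs_of_nonneg hq.1]; linarith [hq.2]

theorem abs_W2_ubar_vbar_sub_le (hδ : HasDerivAt δ (δ' s) s) (hδ' : HasDerivAt δ' (δ'' s) s) :
    |W2 lam mu (ubar δ) (vbar c δ δ') s t - mu / δ s ^ 2| ≤
      energyBound (lam * (c - 1) ^ 2 + 2 * mu + 2 * mu * c ^ 2) (2 * mu) mu (|c| * B) B / δ s := by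
  refine le_of_eq_of_le ?_ (abs_quadratic_remainder_le hd hB.1 (sq_mul_deriv_div_le hd hB ht)
    (abs_pd1_vbar_le hd hB ht))
  rw [W2, pd1_ubar hδ hd.ne', pd2_ubar, pd1_vbar hδ hδ' hd.ne', pd2_vbar hd.ne']
  congr 1
  ring

theorem abs_W2_vbar_ubar_sub_le (hδ : HasDerivAt δ (δ' s) s) (hδ' : HasDerivAt δ' (δ'' s) s) :
    |W2 lam mu (vbar c δ δ') (ubar δ) s t - (lam + 2 * mu) / δ s ^ 2| ≤
      energyBound (mu * (c - 1) ^ 2) (2 * lam) (lam + 2 * mu) (|c| * B) B / δ s := by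
  refine le_of_eq_of_le ?_ (abs_quadratic_remainder_le hd hB.1 (sq_mul_deriv_div_le hd hB ht)
    (abs_pd1_vbar_le hd hB ht))
  rw [W2, pd1_ubar hδ hd.ne', pd2_ubar, pd1_vbar hδ hδ' hd.ne', pd2_vbar hd.ne']
  congr 1
  ring

end Energy

section Continuity

variable {δ δ' δ'' : ℝ → ℝ} {lam mu c : ℝ} (hδ : ∀ s, HasDerivAt δ (δ' s) s)
  (hδ' : ∀ s, HasDerivAt δ' (δ'' s) s) (hδ'' : Continuous δ'') (h0 : ∀ s, δ s ≠ 0)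
include hδ hδ' hδ'' h0

theorem continuous_W2_ubar_vbar :
    Continuous fun p : ℝ × ℝ => W2 lam mu (ubar δ) (vbar c δ δ') p.1 p.2 := by
  have hc : Continuous δ := Differentiable.continuous fun s => (hδ s).differentiableAt
  have hc' : Continuous δ' := Differentiable.continuous fun s => (hδ' s).differentiableAt
  simp only [W2, pd1_ubar (hδ _) (h0 _), pd2_ubar, pd1_vbar (hδ _) (hδ' _) (h0 _),
    pd2_vbar (h0 _), ubar, fbar]
  fun_prop (disch := exact fun _ => h0 _)

theorem continuous_W2_vbar_ubar :
    Continuous fun p : ℝ × ℝ => W2 lam mu (vbar c δ δ') (ubar δ) p.1 p.2 := by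
  have hc : Continuous δ := Differentiable.continuous fun s => (hδ s).differentiableAt
  have hc' : Continuous δ' := Differentiable.continuous fun s => (hδ' s).differentiableAt
  simp only [W2, pd1_ubar (hδ _) (h0 _), pd2_ubar, pd1_vbar (hδ _) (hδ' _) (h0 _),
    pd2_vbar (h0 _), ubar, fbar]
  fun_prop (disch := exact fun _ => h0 _)

end Continuity

noncomputable def gapBound (κ R : ℝ) (k : ℕ) : ℝ :=
  1 / 2 + κ * R ^ (k + 2) + κ * (k + 2) ^ 2 * R ^ k

section Gap

variable {ε κ R s : ℝ} {k : ℕ} (hκ : 0 ≤ κ) (hs : |s| ≤ R)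
include hκ hs

theorem mul_pow_le_gapBound : κ * (k + 2) ^ 2 * |s| ^ k ≤ gapBound κ R k := by
  have hR : 0 ≤ R := (abs_nonneg s).trans hs
  have : 0 ≤ κ * R ^ (k + 2) := by positivity
  have : κ * (k + 2) ^ 2 * |s| ^ k ≤ κ * (k + 2) ^ 2 * R ^ k := by gcongr
  rw [gapBound]
  linarith

theorem gap_le_gapBound (hε' : ε < 1 / 2) : ε + κ * |s| ^ (k + 2) ≤ gapBound κ R k := by
  have hR : 0 ≤ R := (abs_nonneg s).trans hs
  have : κ * |s| ^ (k + 2) ≤ κ * R ^ (k + 2) := by gcongr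
  have : 0 ≤ κ * (k + 2) ^ 2 * R ^ k := by positivity
  rw [gapBound]
  linarith

theorem sq_gap_deriv_le (hε : 0 ≤ ε) :
    (κ * ((k + 2) * (s * |s| ^ k))) ^ 2 ≤ gapBound κ R k * (ε + κ * |s| ^ (k + 2)) := by
  have hP := mul_pow_le_gapBound (k := k) hκ hs
  calc (κ * ((k + 2) * (s * |s| ^ k))) ^ 2
      = κ * (k + 2) ^ 2 * |s| ^ k * (κ * |s| ^ (k + 2)) := by
        rw [mul_pow, mul_pow, mul_pow, ← sq_abs s]
        ring
    _ ≤ gapBound κ R k * (ε + κ * |s| ^ (k + 2)) :=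
        mul_le_mul hP (by linarith) (by positivity) ((by positivity : (0 : ℝ) ≤ _).trans hP)

theorem abs_gap_deriv2_le : |κ * ((k + 2) * ((k + 1) * |s| ^ k))| ≤ gapBound κ R k := by
  rw [abs_of_nonneg (by positivity)]
  calc κ * ((k + 2) * ((k + 1) * |s| ^ k)) ≤ κ * ((k + 2) * ((k + 2) * |s| ^ k)) := by
        gcongr
        linarith
    _ = κ * (k + 2) ^ 2 * |s| ^ k := by ring
    _ ≤ gapBound κ R k := mul_pow_le_gapBound hκ hs

end Gap

section Integral

variable {δ δ' δ'' : ℝ → ℝ} {lam mu c a b B : ℝ} (hδ : ∀ s, HasDerivAt δ (δ' s) s)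
  (hδ' : ∀ s, HasDerivAt δ' (δ'' s) s) (hδ'' : Continuous δ'') (hpos : ∀ s, 0 < δ s)
  (hab : a ≤ b) (hB : ∀ s ∈ Ioo a b, δ s ≤ B ∧ δ' s ^ 2 ≤ B * δ s ∧ |δ'' s| ≤ B)
include hδ hδ' hδ'' hpos hab hB

theorem abs_integral_W2_ubar_vbar_sub_le :
    |(∫ p in regionBetween (fun x => -(δ x / 2)) (fun x => δ x / 2) (Ioo a b),
        W2 lam mu (ubar δ) (vbar c δ δ') p.1 p.2) - mu * ∫ x in a..b, 1 / δ x| ≤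
      energyBound (lam * (c - 1) ^ 2 + 2 * mu + 2 * mu * c ^ 2) (2 * mu) mu (|c| * B) B *
        (b - a) :=
  abs_setIntegral_regionBetween_symm_sub_le hab
    (Differentiable.continuous fun s => (hδ s).differentiableAt) hpos
    (continuous_W2_ubar_vbar hδ hδ' hδ'' fun s => (hpos s).ne')
    fun s hs _ ht => abs_W2_ubar_vbar_sub_le (hpos s) (hB s hs) ht (hδ s) (hδ' s)

theorem abs_integral_W2_vbar_ubar_sub_le :
    |(∫ p in regionBetween (fun x => -(δ x / 2)) (fun x => δ x / 2) (Ioo a b),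
        W2 lam mu (vbar c δ δ') (ubar δ) p.1 p.2) - (lam + 2 * mu) * ∫ x in a..b, 1 / δ x| ≤
      energyBound (mu * (c - 1) ^ 2) (2 * lam) (lam + 2 * mu) (|c| * B) B * (b - a) :=
  abs_setIntegral_regionBetween_symm_sub_le hab
    (Differentiable.continuous fun s => (hδ s).differentiableAt) hpos
    (continuous_W2_vbar_ubar hδ hδ' hδ'' fun s => (hpos s).ne')
    fun s hs _ ht => abs_W2_vbar_ubar_sub_le (hpos s) (hB s hs) ht (hδ s) (hδ' s)

end Integral

theorem setOf_gap_eq_regionBetween (ε κ R : ℝ) (m : ℕ) :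
    {p : ℝ × ℝ | |p.1| < R ∧ -ε / 2 - κ / 2 * |p.1| ^ m < p.2 ∧ p.2 < ε / 2 + κ / 2 * |p.1| ^ m} =
      regionBetween (fun x => -((ε + κ * |x| ^ m) / 2)) (fun x => (ε + κ * |x| ^ m) / 2)
        (Ioo (-R) R) := by
  ext ⟨s, t⟩
  simp only [regionBetween, mem_ofPred_eq, mem_Ioo, abs_lt]
  constructor <;> rintro ⟨h₁, h₂, h₃⟩ <;> exact ⟨h₁, by linarith, by linarith⟩

theorem ubar_gap (ε κ : ℝ) (m : ℕ) :
    ubar (fun s => ε + κ * |s| ^ m) =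
      fun s t => (t + ε / 2 + κ / 2 * |s| ^ m) / (ε + κ * |s| ^ m) := by
  funext s t
  rw [ubar]
  congr 1
  ring

theorem hasDerivAt_gap (ε κ : ℝ) (k : ℕ) (s : ℝ) :
    HasDerivAt (fun s => ε + κ * |s| ^ (k + 2)) (κ * ((k + 2) * (s * |s| ^ k))) s :=
  ((hasDerivAt_abs_pow_add_two k s).const_mul κ).const_add ε

theorem hasDerivAt_gap_deriv (κ : ℝ) (k : ℕ) (s : ℝ) :
    HasDerivAt (fun s => κ * ((k + 2) * (s * |s| ^ k)))
      (κ * ((k + 2) * ((k + 1) * |s| ^ k))) s :=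
  ((hasDerivAt_mul_abs_pow k s).const_mul _).const_mul κ

theorem stmt17_general (lam mu κ R : ℝ) (m : ℕ) (hκ : 0 < κ) (hR : 0 < R) (hm : 2 ≤ m) :
    ∃ C > 0, ∀ ε : ℝ, 0 < ε → ε < 1 / 2 →
      (let δ : ℝ → ℝ := fun s => ε + κ * |s| ^ m
       let ub : ℝ → ℝ → ℝ := fun s t => (t + ε / 2 + κ / 2 * |s| ^ m) / δ s
       let f : ℝ → ℝ := fun t => (1 / 2) * (t - 1 / 2) ^ 2 - 1 / 8
       let Ω : Set (ℝ × ℝ) := {p : ℝ × ℝ | |p.1| < R ∧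
         -ε / 2 - κ / 2 * |p.1| ^ m < p.2 ∧ p.2 < ε / 2 + κ / 2 * |p.1| ^ m}
       let u11 : ℝ → ℝ → ℝ := ub
       let u12 : ℝ → ℝ → ℝ :=
         fun s t => ((lam + mu) / (lam + 2 * mu)) * f (ub s t) * deriv δ s
       let u21 : ℝ → ℝ → ℝ := fun s t => ((lam + mu) / mu) * f (ub s t) * deriv δ s
       let u22 : ℝ → ℝ → ℝ := ub
       |(∫ p in Ω, W2 lam mu u11 u12 p.1 p.2) -
           mu * ∫ x₁ in (-R)..R, 1 / δ x₁| ≤ C ∧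
       |(∫ p in Ω, W2 lam mu u21 u22 p.1 p.2) -
           (lam + 2 * mu) * ∫ x₁ in (-R)..R, 1 / δ x₁| ≤ C) := by
  obtain ⟨k, rfl⟩ : ∃ k, m = k + 2 := ⟨m - 2, by omega⟩
  set c₁ := (lam + mu) / (lam + 2 * mu)
  set c₂ := (lam + mu) / mu
  set B := gapBound κ R k
  refine ⟨max (max (energyBound (lam * (c₁ - 1) ^ 2 + 2 * mu + 2 * mu * c₁ ^ 2) (2 * mu) mu
    (|c₁| * B) B * (R - -R)) (energyBound (mu * (c₂ - 1) ^ 2) (2 * lam) (lam + 2 * mu)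
    (|c₂| * B) B * (R - -R))) 1, by positivity, fun ε hε hε' => ?_⟩
  intro δ ub f Ω u11 u12 u21 u22
  set δ' := fun s : ℝ => κ * ((k + 2) * (s * |s| ^ k))
  have hB : ∀ s ∈ Ioo (-R) R, δ s ≤ B ∧ δ' s ^ 2 ≤ B * δ s ∧
      |κ * ((k + 2) * ((k + 1) * |s| ^ k))| ≤ B := fun s hs =>
    have hs' : |s| ≤ R := abs_le.2 ⟨hs.1.le, hs.2.le⟩
    ⟨gap_le_gapBound hκ.le hs' hε', sq_gap_deriv_le hκ.le hs' hε.le, abs_gap_deriv2_le hκ.le hs'⟩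
  have hpos : ∀ s, 0 < δ s := fun s => by positivity
  have h₁ := abs_integral_W2_ubar_vbar_sub_le (lam := lam) (mu := mu) (c := c₁)
    (hasDerivAt_gap ε κ k) (hasDerivAt_gap_deriv κ k) (by fun_prop) hpos (by linarith) hB
  have h₂ := abs_integral_W2_vbar_ubar_sub_le (lam := lam) (mu := mu) (c := c₂)
    (hasDerivAt_gap ε κ k) (hasDerivAt_gap_deriv κ k) (by fun_prop) hpos (by linarith) hB
  have hub : ub = ubar δ := (ubar_gap ε κ (k + 2)).symm
  have hderiv : deriv δ = δ' := funext fun s => (hasDerivAt_gap ε κ k s).deriv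
  have hu12 : u12 = vbar c₁ δ δ' := by simp only [u12, hub, hderiv]; rfl
  have hu21 : u21 = vbar c₂ δ δ' := by simp only [u21, hub, hderiv]; rfl
  rw [show u11 = ubar δ from hub, show u22 = ubar δ from hub, hu12, hu21,
    show Ω = _ from setOf_gap_eq_regionBetween ε κ R (k + 2)]
  exact ⟨le_max_of_le_left (le_max_of_le_left h₁), le_max_of_le_left (le_max_of_le_right h₂)⟩

/-- In the model narrow region, the elastic energies of the improved auxiliary functions
`u₁¹ = (ū, c_λ f(ū)δ′)ᵀ` and `u₁² = (c_μ f(ū)δ′, ū)ᵀ` equal `μ`, resp. `λ+2μ`, times the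
capacity integral `∫_{−R}^{R} dx₁/δ(x₁)`, up to an error bounded uniformly in `ε`. -/
theorem stmt17 (lam mu κ R : ℝ) (m : ℕ) (hmu : 0 < mu) (hlm : 0 < lam + 2 * mu)
    (hκ : 0 < κ) (hR : 0 < R) (hm : 2 ≤ m) :
    ∃ C > 0, ∀ ε : ℝ, 0 < ε → ε < 1 / 2 →
      (let δ : ℝ → ℝ := fun s => ε + κ * |s| ^ m
       let ub : ℝ → ℝ → ℝ := fun s t => (t + ε / 2 + κ / 2 * |s| ^ m) / δ s
       let f : ℝ → ℝ := fun t => (1 / 2) * (t - 1 / 2) ^ 2 - 1 / 8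
       let Ω : Set (ℝ × ℝ) := {p : ℝ × ℝ | |p.1| < R ∧
         -ε / 2 - κ / 2 * |p.1| ^ m < p.2 ∧ p.2 < ε / 2 + κ / 2 * |p.1| ^ m}
       let u11 : ℝ → ℝ → ℝ := ub
       let u12 : ℝ → ℝ → ℝ :=
         fun s t => ((lam + mu) / (lam + 2 * mu)) * f (ub s t) * deriv δ s
       let u21 : ℝ → ℝ → ℝ := fun s t => ((lam + mu) / mu) * f (ub s t) * deriv δ s
       let u22 : ℝ → ℝ → ℝ := ub
       |(∫ p in Ω, W2 lam mu u11 u12 p.1 p.2) -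
           mu * ∫ x₁ in (-R)..R, 1 / δ x₁| ≤ C ∧
       |(∫ p in Ω, W2 lam mu u21 u22 p.1 p.2) -
           (lam + 2 * mu) * ∫ x₁ in (-R)..R, 1 / δ x₁| ≤ C) :=
  stmt17_general lam mu κ R m hκ hR hm
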